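/- Let (C, m) be a flat minimal G-gapped A∞ algebra with ν(m) < ∞. Then for every pair (k,β) with k + β = ν(m), the operation m_{k,β}, regarded as a Hochschild cochain of internal degree 2−k for the underlying algebra A_C = (C, ·), is a Hochschild cocycle: 𝔟(m_{k,β}) = 0. -/

import Mathlib

/-!
Common definitions: gapped `A∞` algebras over the field `𝕂`, graded by `ℤ/N` (`N` even),
with gapping monoid `G ⊆ ℝ≥0`.  Operations are recorded as families of `k`-ary maps
together with multilinearity and degree conditions; all sign conventions follow the paper.
Since the Koszul signs depend on the degrees of homogeneous arguments, all identities
involving signs are stated on homogeneous tuples.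
-/

open scoped BigOperators

noncomputable section

/-- The sign `(−1)^x` for a parity `x : ZMod 2`, valued in `𝕂`. -/
def sgn2 (𝕂 : Type) [Field 𝕂] (x : ZMod 2) : 𝕂 := if x = 0 then 1 else -1

/-- Parity of a degree in `ℤ/N`; for even `N` this is the canonical map `ℤ/N → ℤ/2`. -/
def par2 {N : ℕ} (d : ZMod N) : ZMod 2 := ((ZMod.val d : ℕ) : ZMod 2)

/-- Extension of a tuple by `0`. -/
def extZ {X : Type} [Zero X] {k : ℕ} (α : Fin k → X) : ℕ → X :=
  fun n => if h : n < k then α ⟨n, h⟩ else 0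

/-- The tuple `(A 0, …, A (i₀−1), v, A (i₀+k₂), …)` of length `k₁` obtained by replacing the
`k₂` entries of `A` starting at position `i₀` by the single entry `v`. -/
def insArg {X : Type} [Zero X] (k₁ k₂ i₀ : ℕ) (v : X) (A : ℕ → X) : Fin k₁ → X :=
  fun j => if (j : ℕ) < i₀ then A j else if (j : ℕ) = i₀ then v else A ((j : ℕ) + k₂ - 1)

/-- Multilinearity of a `k`-ary map. -/
def IsMultilin (𝕂 : Type) [Field 𝕂] {C D : Type} [AddCommGroup C] [Module 𝕂 C]
    [AddCommGroup D] [Module 𝕂 D] {k : ℕ} (f : (Fin k → C) → D) : Prop :=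
  (∀ (α : Fin k → C) (j : Fin k) (x y : C),
    f (Function.update α j (x + y)) = f (Function.update α j x) + f (Function.update α j y)) ∧
  (∀ (α : Fin k → C) (j : Fin k) (c : 𝕂) (x : C),
    f (Function.update α j (c • x)) = c • f (Function.update α j x))

/-- The Koszul sign exponent `s(σ;α) = Σ_{i<j, σ(i)>σ(j)} (|α_{σ(i)}|+1)(|α_{σ(j)}|+1)`,
computed from the degrees `d j = |α_j|`. -/
def koszulSign {N : ℕ} {k : ℕ} (σ : Equiv.Perm (Fin k)) (d : Fin k → ZMod N) : ZMod 2 :=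
  ∑ p ∈ Finset.univ.filter (fun p : Fin k × Fin k => p.1 < p.2 ∧ σ p.2 < σ p.1),
    (par2 (d (σ p.1)) + 1) * (par2 (d (σ p.2)) + 1)

/-- `s(τ;α)` for the order-reversal permutation `τ : i ↦ k+1−i`. -/
def revSign {N : ℕ} {k : ℕ} (d : Fin k → ZMod N) : ZMod 2 :=
  koszulSign Fin.revPerm d

/-- A `k`-ary map between graded spaces has degree `t`: it sends homogeneous tuples of
multidegree `d` into the piece of degree `Σ d + t`. -/
def HasDeg {𝕂 : Type} [Field 𝕂] {N : ℕ} {C D : Type} [AddCommGroup C] [Module 𝕂 C]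
    [AddCommGroup D] [Module 𝕂 D] (ℳ : ZMod N → Submodule 𝕂 C)
    (𝒩 : ZMod N → Submodule 𝕂 D) (t : ℤ) {k : ℕ} (f : (Fin k → C) → D) : Prop :=
  ∀ (d : Fin k → ZMod N) (α : Fin k → C), (∀ j, α j ∈ ℳ (d j)) →
    f α ∈ 𝒩 ((∑ j, d j) + (t : ZMod N))

/-- The exponent `Σ_{j<i₀} (|α_j|+1)` appearing in the `A∞` relations (0-indexed). -/
def insSign {N : ℕ} (D : ℕ → ZMod N) (i₀ : ℕ) : ZMod 2 :=
  ∑ j ∈ Finset.range i₀, (par2 (D j) + 1)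

/-- Index set of the `G`-gapped `A∞` relations for inputs of arity `k` and energy `β`:
tuples `(k₁, k₂, i₀, β₁, β₂)` with `k₁+k₂ = k+1`, `i₀ < k₁` (`i₀` is the 0-indexed insertion
position) and `β₁+β₂ = β`.  By the finiteness assumption on `G` this set is finite. -/
def ainfIdx (G : AddSubmonoid ℝ) (k : ℕ) (β : G) : Set (ℕ × ℕ × ℕ × G × G) :=
  {t | t.1 + t.2.1 = k + 1 ∧ t.2.2.1 < t.1 ∧ t.2.2.2.1 + t.2.2.2.2 = β}

/-- The term of the `A∞`-type relations indexed by `(k₁,k₂,i₀,β₁,β₂)`: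
`(−1)^{Σ_{j<i₀}(|α_j|+1)} g_{k₁,β₁}(α₁,…,α_{i₀}, m_{k₂,β₂}(α_{i₀+1},…), …, α_k)`
(outer family `g`, inner family `m`). -/
def ainfTerm (𝕂 : Type) [Field 𝕂] {N : ℕ} {G : AddSubmonoid ℝ} {C D : Type}
    [AddCommGroup C] [Module 𝕂 C] [AddCommGroup D] [Module 𝕂 D]
    (g : ∀ k : ℕ, G → (Fin k → C) → D) (m : ∀ k : ℕ, G → (Fin k → C) → C)
    {k : ℕ} (d : Fin k → ZMod N) (α : Fin k → C) : ℕ × ℕ × ℕ × G × G → D :=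
  fun t =>
    sgn2 𝕂 (insSign (extZ d) t.2.2.1) •
      g t.1 t.2.2.2.1
        (insArg t.1 t.2.1 t.2.2.1
          (m t.2.1 t.2.2.2.2 fun l => extZ α (t.2.2.1 + (l : ℕ))) (extZ α))

/-- A `G`-gapped `A∞` algebra structure on the graded space `(C, ℳ)`: operations
`m_{k,β}` that are multilinear of degree `2−k`, with `m_{0,0} = 0`, satisfying the
`G`-gapped `A∞` relations on homogeneous tuples. -/
structure IsGappedAinf (𝕂 : Type) [Field 𝕂] {N : ℕ} (G : AddSubmonoid ℝ) {C : Type}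
    [AddCommGroup C] [Module 𝕂 C] (ℳ : ZMod N → Submodule 𝕂 C)
    (m : ∀ k : ℕ, G → (Fin k → C) → C) : Prop where
  multilinear : ∀ (k : ℕ) (β : G), IsMultilin 𝕂 (m k β)
  deg : ∀ (k : ℕ) (β : G), HasDeg ℳ ℳ (2 - (k : ℤ)) (m k β)
  zero : m 0 0 = 0
  rel : ∀ (k : ℕ) (β : G) (d : Fin k → ZMod N) (α : Fin k → C), (∀ j, α j ∈ ℳ (d j)) →
    (∑ᶠ t ∈ ainfIdx G k β, ainfTerm 𝕂 m m d α t) = 0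

/-- A `G`-gapped `A∞` pre-homomorphism: maps `f_{k,β}`, multilinear of degree `1−k`,
with `f_{0,0} = 0`. -/
structure IsGappedPreHom (𝕂 : Type) [Field 𝕂] {N : ℕ} (G : AddSubmonoid ℝ) {C D : Type}
    [AddCommGroup C] [Module 𝕂 C] [AddCommGroup D] [Module 𝕂 D]
    (ℳ : ZMod N → Submodule 𝕂 C) (𝒩 : ZMod N → Submodule 𝕂 D)
    (f : ∀ k : ℕ, G → (Fin k → C) → D) : Prop where
  multilinear : ∀ (k : ℕ) (β : G), IsMultilin 𝕂 (f k β)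
  deg : ∀ (k : ℕ) (β : G), HasDeg ℳ 𝒩 (1 - (k : ℤ)) (f k β)
  zero : f 0 0 = 0

/-- Index set for the composition-type sums: tuples `(l, (r₁,…,r_l), β₀, (β₁,…,β_l))`
with `r₁+⋯+r_l = k` and `β₀+β₁+⋯+β_l = β`. -/
def homIdx (G : AddSubmonoid ℝ) (k : ℕ) (β : G) :
    Set (Σ l : ℕ, (Fin l → ℕ) × G × (Fin l → G)) :=
  {t | (∑ j, t.2.1 j) = k ∧ t.2.2.1 + (∑ j, t.2.2.2 j) = β}

/-- Offset `r₁ + ⋯ + r_{j}` of the `j`-th chunk of the inputs. -/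
def chunkOff {l : ℕ} (r : Fin l → ℕ) (j : Fin l) : ℕ :=
  ∑ j' ∈ Finset.univ.filter (fun j' : Fin l => (j' : ℕ) < (j : ℕ)), r j'

/-- The term `g_{l,β₀}(f_{r₁,β₁}(α₁,…,α_{r₁}), …, f_{r_l,β_l}(α_{k−r_l+1},…,α_k))`. -/
def homTerm {G : AddSubmonoid ℝ} {C D E : Type} [Zero C]
    (g : ∀ l : ℕ, G → (Fin l → D) → E) (f : ∀ k : ℕ, G → (Fin k → C) → D)
    {k : ℕ} (α : Fin k → C) : (Σ l : ℕ, (Fin l → ℕ) × G × (Fin l → G)) → E :=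
  fun t =>
    g t.1 t.2.2.1 fun j =>
      f (t.2.1 j) (t.2.2.2 j) fun x => extZ α (chunkOff t.2.1 j + (x : ℕ))

/-- Composition of `G`-gapped `A∞` pre-homomorphisms. -/
def compPre (G : AddSubmonoid ℝ) {C D E : Type} [Zero C] [AddCommMonoid E]
    (g : ∀ l : ℕ, G → (Fin l → D) → E) (f : ∀ k : ℕ, G → (Fin k → C) → D) :
    ∀ k : ℕ, G → (Fin k → C) → E :=
  fun k β α => ∑ᶠ t ∈ homIdx G k β, homTerm g f α t

/-- A `G`-gapped `A∞` homomorphism from `(C, mC)` to `(D, mD)`. -/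
structure IsGappedHom (𝕂 : Type) [Field 𝕂] {N : ℕ} (G : AddSubmonoid ℝ) {C D : Type}
    [AddCommGroup C] [Module 𝕂 C] [AddCommGroup D] [Module 𝕂 D]
    (ℳ : ZMod N → Submodule 𝕂 C) (𝒩 : ZMod N → Submodule 𝕂 D)
    (mC : ∀ k : ℕ, G → (Fin k → C) → C) (mD : ∀ k : ℕ, G → (Fin k → D) → D)
    (f : ∀ k : ℕ, G → (Fin k → C) → D) : Prop where
  prehom : IsGappedPreHom 𝕂 G ℳ 𝒩 f
  hom : ∀ (k : ℕ) (β : G) (d : Fin k → ZMod N) (α : Fin k → C), (∀ j, α j ∈ ℳ (d j)) →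
    (∑ᶠ t ∈ homIdx G k β, homTerm mD f α t) = ∑ᶠ t ∈ ainfIdx G k β, ainfTerm 𝕂 f mC d α t

/-- `f'` is the opposite family of `f`:
`f'_{k,β}(α₁,…,α_k) = (−1)^{s(τ;α)+k+1} f_{k,β}(α_k,…,α₁)` on homogeneous tuples. -/
def IsOppFam (𝕂 : Type) [Field 𝕂] {N : ℕ} {G : AddSubmonoid ℝ} {C D : Type}
    [AddCommGroup C] [Module 𝕂 C] [AddCommGroup D] [Module 𝕂 D]
    (ℳ : ZMod N → Submodule 𝕂 C)
    (f f' : ∀ k : ℕ, G → (Fin k → C) → D) : Prop :=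
  ∀ (k : ℕ) (β : G) (d : Fin k → ZMod N) (α : Fin k → C), (∀ j, α j ∈ ℳ (d j)) →
    f' k β α = sgn2 𝕂 (revSign d + (k : ZMod 2) + 1) • f k β fun j => α (Fin.rev j)

/-- Self-duality of a family with respect to involutions `cC`, `cD`:
`f_{k,β}(c(α₁),…,c(α_k)) = (−1)^{s(τ;α)+k+1} c(f_{k,β}(α_k,…,α₁))` on homogeneous tuples. -/
def IsSelfDualFam (𝕂 : Type) [Field 𝕂] {N : ℕ} {G : AddSubmonoid ℝ} {C D : Type}
    [AddCommGroup C] [Module 𝕂 C] [AddCommGroup D] [Module 𝕂 D]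
    (ℳ : ZMod N → Submodule 𝕂 C) (cC : C →ₗ[𝕂] C) (cD : D →ₗ[𝕂] D)
    (f : ∀ k : ℕ, G → (Fin k → C) → D) : Prop :=
  ∀ (k : ℕ) (β : G) (d : Fin k → ZMod N) (α : Fin k → C), (∀ j, α j ∈ ℳ (d j)) →
    f k β (fun j => cC (α j)) =
      sgn2 𝕂 (revSign d + (k : ZMod 2) + 1) • cD (f k β fun j => α (Fin.rev j))

/-- The operation `m_{1,0}`, as an endomorphism of `C`. -/
def dOne {G : AddSubmonoid ℝ} {C : Type} [Zero C] (m : ∀ k : ℕ, G → (Fin k → C) → C) :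
    C → C :=
  fun x => m 1 0 ![x]

/-- The Hochschild coboundary of a `k`-cochain `η`, evaluated on a homogeneous `(k+1)`-tuple
of multidegree `d`.  Here `P a b x y` is the (possibly sign-twisted) product of `x ∈ ℳ a`
and `y ∈ ℳ b`, `e` is the parity of the internal degree `|η|` of `η` (as a map
`A[1]^{⊗k} → A`), and `out` is such that `η` sends tuples of multidegree `d'` into degree
`Σ d' + out`.  The formula is
`𝔟(η)(α₁,…,α_{k+1}) = (−1)^{|η|(|α₁|+1)+1} α₁·η(α₂,…,α_{k+1})`
`+ Σ_{i=1}^{k} (−1)^{|η|+1+Σ_{j=1}^{i}(|α_j|+1)} η(α₁,…,α_i·α_{i+1},…,α_{k+1})`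
`+ (−1)^{|η|+Σ_{j=1}^{k}(|α_j|+1)} η(α₁,…,α_k)·α_{k+1}`. -/
def hochB (𝕂 : Type) [Field 𝕂] {N : ℕ} {C : Type} [AddCommGroup C] [Module 𝕂 C]
    (P : ZMod N → ZMod N → C → C → C) (e : ZMod 2) (out : ZMod N)
    {k : ℕ} (η : (Fin k → C) → C) (d : Fin (k + 1) → ZMod N) (α : Fin (k + 1) → C) : C :=
  sgn2 𝕂 (e * (par2 (d 0) + 1) + 1) •
      P (d 0) ((∑ j : Fin k, d j.succ) + out) (α 0) (η fun j => α j.succ)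
    + (∑ i₀ ∈ Finset.range k,
        sgn2 𝕂 (e + 1 + ∑ j ∈ Finset.range (i₀ + 1), (par2 (extZ d j) + 1)) •
          η (insArg k 2 i₀
              (P (extZ d i₀) (extZ d (i₀ + 1)) (extZ α i₀) (extZ α (i₀ + 1))) (extZ α)))
    + sgn2 𝕂 (e + ∑ j ∈ Finset.range k, (par2 (extZ d j) + 1)) •
        P ((∑ j : Fin k, d j.castSucc) + out) (d (Fin.last k))
          (η fun j => α j.castSucc) (α (Fin.last k))

/-- The product of the underlying algebra of an `A∞` algebra:
`x ∘ y = (−1)^{|x|} m_{2,0}(x,y)` for `x` of degree `a`. -/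
def ulP (𝕂 : Type) [Field 𝕂] {N : ℕ} {G : AddSubmonoid ℝ} {C : Type} [AddCommGroup C]
    [Module 𝕂 C] (m : ∀ k : ℕ, G → (Fin k → C) → C) :
    ZMod N → ZMod N → C → C → C :=
  fun a _ x y => sgn2 𝕂 (par2 a) • m 2 0 ![x, y]

/-- The Hochschild coboundary for a graded associative algebra `A`, of a `k`-cochain `η`
of internal degree `t` (as a map `A[1]^{⊗k} → A`, so that `η` sends homogeneous tuples of
multidegree `d` into degree `Σ d + t − k`). -/
def hochBAlg (𝕂 : Type) [Field 𝕂] {N : ℕ} {A : Type} [Ring A] [Algebra 𝕂 A]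
    (t : ZMod N) {k : ℕ} (η : (Fin k → A) → A) (d : Fin (k + 1) → ZMod N)
    (α : Fin (k + 1) → A) : A :=
  hochB 𝕂 (fun _ _ x y => x * y) (par2 t) (t - (k : ZMod N)) η d α

/-- A Hochschild `k`-cochain of the graded algebra `(A, ℳ)` of internal degree `t`:
a multilinear map `A^{⊗k} → A`, regarded as a map `A[1]^{⊗k} → A` of degree `t`. -/
def IsHochCochain (𝕂 : Type) [Field 𝕂] {N : ℕ} {A : Type} [Ring A] [Algebra 𝕂 A]
    (ℳ : ZMod N → Submodule 𝕂 A) (t : ZMod N) {k : ℕ} (η : (Fin k → A) → A) : Prop :=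
  IsMultilin 𝕂 η ∧
    ∀ (d : Fin k → ZMod N) (α : Fin k → A), (∀ j, α j ∈ ℳ (d j)) →
      η α ∈ ℳ ((∑ j, d j) + t - (k : ZMod N))

/-- The graded-commutativity relation defining the free graded commutative algebra on the
graded vector space `(V, 𝒱)`: `v ⊗ w = (−1)^{|v||w|} w ⊗ v` for homogeneous `v, w`. -/
inductive GCRel (𝕂 : Type) [Field 𝕂] {N : ℕ} (V : Type) [AddCommGroup V] [Module 𝕂 V]
    (𝒱 : ZMod N → Submodule 𝕂 V) : TensorAlgebra 𝕂 V → TensorAlgebra 𝕂 V → Prop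
  | comm : ∀ {a b : ZMod N} {v w : V}, v ∈ 𝒱 a → w ∈ 𝒱 b →
      GCRel 𝕂 V 𝒱 (TensorAlgebra.ι 𝕂 v * TensorAlgebra.ι 𝕂 w)
        (sgn2 𝕂 (par2 a * par2 b) • (TensorAlgebra.ι 𝕂 w * TensorAlgebra.ι 𝕂 v))

/-- The free graded commutative algebra `ΛV` on the graded vector space `(V, 𝒱)`: the
quotient of the tensor algebra by the two-sided ideal generated by
`v⊗w − (−1)^{|v||w|} w⊗v`. -/
abbrev FreeGCA (𝕂 : Type) [Field 𝕂] {N : ℕ} (V : Type) [AddCommGroup V] [Module 𝕂 V]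
    (𝒱 : ZMod N → Submodule 𝕂 V) : Type :=
  RingQuot (GCRel 𝕂 V 𝒱)

/-- The image of `v ∈ V` in `ΛV`. -/
def gcaGen (𝕂 : Type) [Field 𝕂] {N : ℕ} (V : Type) [AddCommGroup V] [Module 𝕂 V]
    (𝒱 : ZMod N → Submodule 𝕂 V) (v : V) : FreeGCA 𝕂 V 𝒱 :=
  RingQuot.mkAlgHom 𝕂 (GCRel 𝕂 V 𝒱) (TensorAlgebra.ι 𝕂 v)

/-- The grading of `ΛV`: the piece of degree `e` is spanned by products of homogeneous
generators whose degrees sum to `e`. -/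
def gcaGrade (𝕂 : Type) [Field 𝕂] {N : ℕ} (V : Type) [AddCommGroup V] [Module 𝕂 V]
    (𝒱 : ZMod N → Submodule 𝕂 V) (e : ZMod N) : Submodule 𝕂 (FreeGCA 𝕂 V 𝒱) :=
  Submodule.span 𝕂 {x | ∃ l : List (ZMod N × V), (∀ p ∈ l, p.2 ∈ 𝒱 p.1) ∧
    (l.map Prod.fst).sum = e ∧ x = (l.map fun p => gcaGen 𝕂 V 𝒱 p.2).prod}
end

noncomputable section AuxProof
open Finset

variable {𝕂 : Type} [Field 𝕂]

lemma zmod2_cases : ∀ x : ZMod 2, x = 0 ∨ x = 1 := by decide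

lemma sgn2_add (x y : ZMod 2) : sgn2 𝕂 (x + y) = sgn2 𝕂 x * sgn2 𝕂 y := by
  have h2 : (1 + 1 : ZMod 2) = 0 := by decide
  rcases zmod2_cases x with h | h <;> rcases zmod2_cases y with h' | h' <;>
    subst h <;> subst h' <;> simp [sgn2, h2]

lemma sgn2_smul_smul {M : Type} [AddCommGroup M] [Module 𝕂 M] (x y : ZMod 2) (v : M) :
    sgn2 𝕂 x • sgn2 𝕂 y • v = sgn2 𝕂 (x + y) • v := by
  rw [sgn2_add, mul_smul]

-- par2 lemmas
lemma par2_eq_cast {N : ℕ} (hN : 2 ∣ N) (x : ZMod N) :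
    par2 x = ZMod.castHom hN (ZMod 2) x := by
  cases N with
  | zero =>
    have hx : ∀ y : ℤ, ((y.natAbs : ℕ) : ZMod 2) = ((y : ℤ) : ZMod 2) := by
      intro y
      rcases Int.natAbs_eq y with h | h
      · conv_rhs => rw [h, Int.cast_natCast]
      · conv_rhs => rw [h, Int.cast_neg, Int.cast_natCast]
        rcases zmod2_cases ((y.natAbs : ZMod 2)) with h' | h' <;> rw [h'] <;> decide
    exact hx x
  | succ n => rfl

lemma par2_add {N : ℕ} (hN : 2 ∣ N) (x y : ZMod N) :
    par2 (x + y) = par2 x + par2 y := by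
  simp only [par2_eq_cast hN, map_add]

lemma par2_natCast {N : ℕ} (hN : 2 ∣ N) (n : ℕ) :
    par2 ((n : ZMod N)) = (n : ZMod 2) := by
  rw [par2_eq_cast hN, map_natCast]

lemma par2_intCast {N : ℕ} (hN : 2 ∣ N) (n : ℤ) :
    par2 ((n : ZMod N)) = (n : ZMod 2) := by
  rw [par2_eq_cast hN, map_intCast]

lemma par2_sum {N : ℕ} (hN : 2 ∣ N) {ι : Type*} (s : Finset ι) (f : ι → ZMod N) :
    par2 (∑ j ∈ s, f j) = ∑ j ∈ s, par2 (f j) := by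
  simp only [par2_eq_cast hN, map_sum]

-- multilinearity
lemma multilin_smul_arg {C D : Type} [AddCommGroup C] [Module 𝕂 C]
    [AddCommGroup D] [Module 𝕂 D] {k : ℕ} {f : (Fin k → C) → D}
    (hf : IsMultilin 𝕂 f) (α : Fin k → C) (j : Fin k) (c : 𝕂) (x : C)
    (h : α j = c • x) : f α = c • f (Function.update α j x) := by
  have h1 : α = Function.update α j (c • x) := by
    funext i; rcases eq_or_ne i j with rfl | hi
    · simp [h]
    · simp [Function.update_of_ne hi]
  calc f α = f (Function.update α j (c • x)) := by rw [← h1]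
    _ = c • f (Function.update α j x) := hf.2 α j c x

lemma multilin_zero_arg {C D : Type} [AddCommGroup C] [Module 𝕂 C]
    [AddCommGroup D] [Module 𝕂 D] {k : ℕ} {f : (Fin k → C) → D}
    (hf : IsMultilin 𝕂 f) (α : Fin k → C) (j : Fin k) (h : α j = 0) : f α = 0 := by
  have := multilin_smul_arg hf α j 0 0 (by simp [h])
  simpa using this

end AuxProof
noncomputable section AuxProof2

lemma insArg_at {X : Type} [Zero X] (k₁ k₂ i₀ : ℕ) (v : X) (A : ℕ → X) (h : i₀ < k₁) :
    insArg k₁ k₂ i₀ v A ⟨i₀, h⟩ = v := by simp [insArg]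

lemma insArg_update {X : Type} [Zero X] (k₁ k₂ i₀ : ℕ) (v w : X) (A : ℕ → X) (h : i₀ < k₁) :
    Function.update (insArg k₁ k₂ i₀ v A) ⟨i₀, h⟩ w = insArg k₁ k₂ i₀ w A := by
  funext j
  rcases eq_or_ne j ⟨i₀, h⟩ with rfl | hj
  · simp [insArg]
  · rw [Function.update_of_ne hj]
    have hne : (j : ℕ) ≠ i₀ := fun hc => hj (Fin.ext hc)
    simp [insArg, hne]


lemma sgn2_zero {𝕂 : Type} [Field 𝕂] : sgn2 𝕂 0 = 1 := by simp [sgn2]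

lemma ainfTerm_eval (𝕂 : Type) [Field 𝕂] {N : ℕ} {G : AddSubmonoid ℝ} {C D : Type}
    [AddCommGroup C] [Module 𝕂 C] [AddCommGroup D] [Module 𝕂 D]
    (g : ∀ k : ℕ, G → (Fin k → C) → D) (m : ∀ k : ℕ, G → (Fin k → C) → C)
    {k : ℕ} (d : Fin k → ZMod N) (α : Fin k → C)
    (k₁ k₂ i₀ : ℕ) (β₁ β₂ : G) :
    ainfTerm 𝕂 g m d α (k₁, k₂, i₀, β₁, β₂) =
      sgn2 𝕂 (insSign (extZ d) i₀) •
        g k₁ β₁ (insArg k₁ k₂ i₀ (m k₂ β₂ fun l => extZ α (i₀ + (l : ℕ))) (extZ α)) := rfl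

lemma ulP_eval (𝕂 : Type) [Field 𝕂] {N : ℕ} {G : AddSubmonoid ℝ} {C : Type}
    [AddCommGroup C] [Module 𝕂 C] (m : ∀ k : ℕ, G → (Fin k → C) → C)
    (a b : ZMod N) (x y : C) :
    ulP 𝕂 m a b x y = sgn2 𝕂 (par2 a) • m 2 0 ![x, y] := rfl

lemma insSign_zero {N : ℕ} (D : ℕ → ZMod N) : insSign D 0 = 0 := by simp [insSign]

lemma insSign_one {N : ℕ} (D : ℕ → ZMod N) : insSign D 1 = par2 (D 0) + 1 := by
  simp [insSign]

end AuxProof2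
/-- Let `(C, m)` be a flat minimal `G`-gapped `A∞` algebra with
`ν(m) < ∞`, where `ν(m) = min{k+β : k+β > 2, m_{k,β} ≠ 0}`.  Then for every `(k,β)` with
`k + β = ν(m)`, the operation `m_{k,β}`, regarded as a Hochschild cochain of degree `2−k`
(of arity `k`, hence of shifted degree `2` as a map `A_C[1]^{⊗k} → A_C`) for the
underlying algebra `A_C = (C, ·)` with `x·y = (−1)^{|x|} m_{2,0}(x,y)`, is a Hochschild
cocycle: `𝔟(m_{k,β}) = 0`. -/
theorem level_nu_operation_is_cocycle {𝕂 : Type} [Field 𝕂] {N : ℕ} (hN : 2 ∣ N)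
    (G : AddSubmonoid ℝ) (hGnn : ∀ x ∈ G, (0 : ℝ) ≤ x)
    (hGfin : ∀ E : ℝ, {x : ℝ | x ∈ G ∧ x ≤ E}.Finite)
    {C : Type} [AddCommGroup C] [Module 𝕂 C] (ℳ : ZMod N → Submodule 𝕂 C)
    [DirectSum.Decomposition ℳ]
    (m : ∀ k : ℕ, G → (Fin k → C) → C) (hm : IsGappedAinf 𝕂 G ℳ m)
    (hflat : ∀ β : G, m 0 β = 0) (hmin : ∀ β : G, m 1 β = 0)
    -- `ν = ν(m)`:
    (ν : ℝ) (hν2 : 2 < ν)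
    (hbelow : ∀ (k : ℕ) (β : G), 2 < (k : ℝ) + (β : ℝ) → (k : ℝ) + (β : ℝ) < ν →
      m k β = 0)
    (hattain : ∃ (k : ℕ) (β : G), (k : ℝ) + (β : ℝ) = ν ∧ m k β ≠ 0) :
    ∀ (k : ℕ) (β : G), (k : ℝ) + (β : ℝ) = ν →
      ∀ (d : Fin (k + 1) → ZMod N) (α : Fin (k + 1) → C), (∀ j, α j ∈ ℳ (d j)) →
        hochB 𝕂 (ulP 𝕂 m) (par2 (((2 - (k : ℤ)) : ℤ) : ZMod N) + (k : ZMod 2))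
          (((2 - (k : ℤ)) : ℤ) : ZMod N) (m k β) d α = 0 := by
  classical
  intro k β hkβ d α hα
  set f : ℕ × ℕ × ℕ × G × G → C := ainfTerm 𝕂 m m d α with hf
  set tA : ℕ × ℕ × ℕ × G × G := (2, k, 1, 0, β) with htA
  set tB : ℕ × ℕ × ℕ × G × G := (2, k, 0, 0, β) with htB
  set T : Finset (ℕ × ℕ × ℕ × G × G) :=
    insert tA (insert tB ((Finset.range k).image fun i => (k, 2, i, β, 0))) with hT
  -- every index outside `T` contributes zero
  have hβnn : (0:ℝ) ≤ (β : ℝ) := hGnn _ β.2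
  have hzero : ∀ t ∈ ainfIdx G (k+1) β, t ∉ (T : Set (ℕ × ℕ × ℕ × G × G)) → f t = 0 := by
    rintro ⟨k₁, k₂, i₀, β₁, β₂⟩ ht hnT
    obtain ⟨h1, h2, h3⟩ := ht
    simp only at h1 h2 h3
    by_cases hm2 : m k₂ β₂ = 0
    · have : f (k₁, k₂, i₀, β₁, β₂) =
          sgn2 𝕂 (insSign (extZ d) i₀) • m k₁ β₁
            (insArg k₁ k₂ i₀ ((0 : (Fin k₂ → C) → C) fun l => extZ α (i₀ + (l : ℕ))) (extZ α)) := by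
        rw [hf]; unfold ainfTerm; rw [hm2]
      rw [this]
      rw [multilin_zero_arg (hm.multilinear k₁ β₁) _ ⟨i₀, h2⟩ (by
        rw [insArg_at]; rfl), smul_zero]
    by_cases hm1 : m k₁ β₁ = 0
    · have : f (k₁, k₂, i₀, β₁, β₂) = sgn2 𝕂 (insSign (extZ d) i₀) •
          (m k₁ β₁) (insArg k₁ k₂ i₀ ((m k₂ β₂) fun l => extZ α (i₀ + (l : ℕ))) (extZ α)) := rfl
      rw [this, hm1]; simp
    exfalso
    -- arithmetic classification
    have hk1 : 2 ≤ k₁ := by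
      by_contra h
      interval_cases k₁
      · exact hm1 (hflat β₁)
      · exact hm1 (hmin β₁)
    have hk2 : 2 ≤ k₂ := by
      by_contra h
      interval_cases k₂
      · exact hm2 (hflat β₂)
      · exact hm2 (hmin β₂)
    have hβ1 : (0:ℝ) ≤ (β₁ : ℝ) := hGnn _ β₁.2
    have hβ2 : (0:ℝ) ≤ (β₂ : ℝ) := hGnn _ β₂.2
    have hsum : ((k₁ : ℝ) + β₁) + ((k₂ : ℝ) + β₂) = ν + 2 := by
      have h1' : (k₁ : ℝ) + (k₂ : ℝ) = (k : ℝ) + 2 := by exact_mod_cast congrArg (Nat.cast : ℕ → ℝ) h1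
      have h3' : (β₁ : ℝ) + (β₂ : ℝ) = (β : ℝ) := by exact_mod_cast congrArg (fun x : G => (x : ℝ)) h3
      linarith [hkβ]
    have hc1 : ¬(2 < (k₁ : ℝ) + β₁ ∧ (k₁ : ℝ) + β₁ < ν) := fun ⟨u, v⟩ => hm1 (hbelow k₁ β₁ u v)
    have hc2 : ¬(2 < (k₂ : ℝ) + β₂ ∧ (k₂ : ℝ) + β₂ < ν) := fun ⟨u, v⟩ => hm2 (hbelow k₂ β₂ u v)
    have hge1 : (2:ℝ) ≤ (k₁ : ℝ) + β₁ := by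
      have : (2:ℝ) ≤ (k₁:ℝ) := by exact_mod_cast hk1
      linarith
    have hge2 : (2:ℝ) ≤ (k₂ : ℝ) + β₂ := by
      have : (2:ℝ) ≤ (k₂:ℝ) := by exact_mod_cast hk2
      linarith
    apply hnT
    simp only [Finset.coe_insert, Set.mem_insert_iff, Finset.coe_image, Set.mem_image,
      Finset.mem_coe, Finset.mem_range, hT]
    rcases eq_or_lt_of_le hge1 with hA | hA
    · -- k₁ + β₁ = 2 : outer is m_{2,0}, inner is m_{k,β}
      have hb10 : (β₁ : ℝ) = 0 := by
        have : (k₁:ℝ) ≤ 2 := by linarith [hA.symm]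
        have hk12 : (2:ℝ) ≤ (k₁:ℝ) := by exact_mod_cast hk1
        linarith [hA.symm]
      have hk12 : k₁ = 2 := by
        have : (k₁ : ℝ) = 2 := by linarith [hA.symm]
        exact_mod_cast this
      have hb1z : β₁ = 0 := Subtype.ext hb10
      have hk2k : k₂ = k := by omega
      have hb2β : β₂ = β := by rw [hb1z, zero_add] at h3; exact h3
      subst hk12; subst hb1z; subst hk2k; subst hb2β
      interval_cases i₀
      · right; left; rfl
      · left; rfl
    · -- k₁ + β₁ > 2, so k₁ + β₁ ≥ ν and k₂ + β₂ = 2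
      have hν1 : ν ≤ (k₁ : ℝ) + β₁ := by
        by_contra h
        exact hc1 ⟨hA, lt_of_not_ge h⟩
      have hB : (k₂ : ℝ) + β₂ = 2 := by
        rcases eq_or_lt_of_le hge2 with h | h
        · exact h.symm
        · exfalso
          have : (k₂ : ℝ) + β₂ < ν := by linarith
          exact hc2 ⟨h, this⟩
      have hb20 : (β₂ : ℝ) = 0 := by
        have hk22 : (2:ℝ) ≤ (k₂:ℝ) := by exact_mod_cast hk2
        linarith
      have hk22 : k₂ = 2 := by
        have : (k₂ : ℝ) = 2 := by linarith
        exact_mod_cast this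
      have hb2z : β₂ = 0 := Subtype.ext hb20
      have hk1k : k₁ = k := by omega
      have hb1β : β₁ = β := by rw [hb2z, add_zero] at h3; exact h3
      subst hk22; subst hb2z; subst hk1k; subst hb1β
      right; right
      exact ⟨i₀, h2, rfl⟩
  have hTsub : (T : Set (ℕ × ℕ × ℕ × G × G)) ⊆ ainfIdx G (k+1) β := by
    intro t ht
    simp only [Finset.coe_insert, Set.mem_insert_iff, Finset.coe_image, Set.mem_image,
      Finset.mem_coe, Finset.mem_range, hT] at ht
    rcases ht with rfl | rfl | ⟨i, hi, rfl⟩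
    · rw [htA]
      exact ⟨by show 2 + k = k + 1 + 1; omega, by show 1 < 2; omega, by show (0:G) + β = β; simp⟩
    · rw [htB]
      exact ⟨by show 2 + k = k + 1 + 1; omega, by show 0 < 2; omega, by show (0:G) + β = β; simp⟩
    · exact ⟨by show k + 2 = k + 1 + 1; omega, by show i < k; omega, by show β + (0:G) = β; simp⟩
  -- the finsum reduces to the sum over `T`
  have hred : ∑ᶠ t ∈ ainfIdx G (k+1) β, f t = ∑ t ∈ T, f t := by
    apply finsum_mem_eq_sum_of_inter_support_eq
    ext t
    simp only [Set.mem_inter_iff, Function.mem_support, Finset.coe_sort_coe, Finset.mem_coe]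
    constructor
    · rintro ⟨h1, h2⟩
      refine ⟨by_contra fun hn => h2 (hzero t h1 hn), h2⟩
    · rintro ⟨h1, h2⟩
      exact ⟨hTsub h1, h2⟩
  -- the sum over `T` equals the Hochschild coboundary
  have hmatch : hochB 𝕂 (ulP 𝕂 m) (par2 (((2 - (k : ℤ)) : ℤ) : ZMod N) + (k : ZMod 2))
      (((2 - (k : ℤ)) : ℤ) : ZMod N) (m k β) d α = ∑ t ∈ T, f t := by
    have he : par2 (((2 - (k : ℤ)) : ℤ) : ZMod N) + (k : ZMod 2) = 0 := by
      rw [par2_intCast hN]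
      push_cast
      generalize (k : ZMod 2) = x
      revert x; decide
    have hout : (par2 (((2 - (k : ℤ)) : ℤ) : ZMod N)) = (k : ZMod 2) := by
      rw [par2_intCast hN]
      push_cast
      generalize (k : ZMod 2) = x
      revert x; decide
    have hβne : ¬(k = 2 ∧ β = 0) := by
      rintro ⟨hk2, hb0⟩
      rw [hk2, hb0] at hkβ
      simp at hkβ
      linarith
    have hAB : tA ≠ tB := by
      rw [htA, htB]; simp [Prod.ext_iff]
    have hAim : tA ∉ (Finset.range k).image (fun i => ((k, 2, i, β, 0) : ℕ × ℕ × ℕ × G × G)) := by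
      rw [htA]
      simp only [Finset.mem_image, Finset.mem_range, not_exists, not_and]
      intro i hi h
      have h1 := congrArg (fun t : ℕ × ℕ × ℕ × G × G => t.1) h
      have h5 := congrArg (fun t : ℕ × ℕ × ℕ × G × G => t.2.2.2.2) h
      simp only at h1 h5
      exact hβne ⟨h1, h5.symm⟩
    have hBim : tB ∉ (Finset.range k).image (fun i => ((k, 2, i, β, 0) : ℕ × ℕ × ℕ × G × G)) := by
      rw [htB]
      simp only [Finset.mem_image, Finset.mem_range, not_exists, not_and]
      intro i hi h
      have h1 := congrArg (fun t : ℕ × ℕ × ℕ × G × G => t.1) h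
      have h5 := congrArg (fun t : ℕ × ℕ × ℕ × G × G => t.2.2.2.2) h
      simp only at h1 h5
      exact hβne ⟨h1, h5.symm⟩
    have hsplit : ∑ t ∈ T, f t
        = f tA + (f tB + ∑ i ∈ Finset.range k, f (k, 2, i, β, 0)) := by
      rw [hT, Finset.sum_insert (by
          rw [Finset.mem_insert]
          rintro (h | h)
          · exact hAB h
          · exact hAim h),
        Finset.sum_insert hBim,
        Finset.sum_image (fun x _ y _ h => by
          simpa using congrArg (fun t : ℕ × ℕ × ℕ × G × G => t.2.2.1) h)]
    unfold hochB
    rw [he]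
    have h0d : extZ d 0 = d 0 := by simp [extZ]
    have hE1 : sgn2 𝕂 (0 * (par2 (d 0) + 1) + 1) •
        ulP 𝕂 m (d 0) ((∑ j : Fin k, d j.succ) + (((2 - (k : ℤ)) : ℤ) : ZMod N)) (α 0)
          (m k β fun j => α j.succ) = f tA := by
      rw [hf, htA, ainfTerm_eval]
      have harg : (fun l : Fin k => extZ α (1 + (l : ℕ))) = (fun j : Fin k => α j.succ) := by
        funext l
        have hl : 1 + (l : ℕ) < k + 1 := by omega
        simp only [extZ, dif_pos hl]
        congr 1
        exact Fin.ext (by simp [Nat.add_comm])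
      rw [harg]
      have hins : insArg 2 k 1 (m k β fun j => α j.succ) (extZ α) =
          ![α 0, m k β fun j => α j.succ] := by
        funext j
        fin_cases j
        · simp [insArg, extZ]
        · simp [insArg]
      rw [hins, ulP_eval, sgn2_smul_smul, insSign_one, h0d]
      congr 2
      ring
    have hE2 : (∑ i₀ ∈ Finset.range k,
        sgn2 𝕂 (0 + 1 + ∑ j ∈ Finset.range (i₀ + 1), (par2 (extZ d j) + 1)) •
          m k β (insArg k 2 i₀
            (ulP 𝕂 m (extZ d i₀) (extZ d (i₀ + 1)) (extZ α i₀) (extZ α (i₀ + 1)))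
            (extZ α)))
        = ∑ i ∈ Finset.range k, f (k, 2, i, β, 0) := by
      refine Finset.sum_congr rfl fun i hi => ?_
      rw [Finset.mem_range] at hi
      rw [hf, ainfTerm_eval, ulP_eval]
      have hu : (fun l : Fin 2 => extZ α (i + (l : ℕ))) = ![extZ α i, extZ α (i + 1)] := by
        funext l; fin_cases l <;> simp
      rw [hu]
      rw [multilin_smul_arg (hm.multilinear k β)
        (insArg k 2 i (sgn2 𝕂 (par2 (extZ d i)) • m 2 0 ![extZ α i, extZ α (i + 1)]) (extZ α))
        ⟨i, hi⟩ (sgn2 𝕂 (par2 (extZ d i))) (m 2 0 ![extZ α i, extZ α (i + 1)])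
        (insArg_at _ _ _ _ _ hi), insArg_update]
      rw [sgn2_smul_smul]
      congr 1
      show sgn2 𝕂 _ = sgn2 𝕂 (insSign (extZ d) i)
      congr 1
      rw [Finset.sum_range_succ]
      unfold insSign
      have h2 : ∀ S P : ZMod 2, (0 : ZMod 2) + 1 + (S + (P + 1)) + P = S := by decide
      exact h2 _ _
    have hE3 : sgn2 𝕂 (0 + ∑ j ∈ Finset.range k, (par2 (extZ d j) + 1)) •
        ulP 𝕂 m ((∑ j : Fin k, d j.castSucc) + (((2 - (k : ℤ)) : ℤ) : ZMod N)) (d (Fin.last k))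
          (m k β fun j => α j.castSucc) (α (Fin.last k)) = f tB := by
      rw [hf, htB, ainfTerm_eval]
      have harg : (fun l : Fin k => extZ α (0 + (l : ℕ))) = (fun j : Fin k => α j.castSucc) := by
        funext l
        have hl : 0 + (l : ℕ) < k + 1 := by omega
        simp only [extZ, dif_pos hl]
        congr 1
        exact Fin.ext (by simp)
      rw [harg]
      have hins : insArg 2 k 0 (m k β fun j => α j.castSucc) (extZ α) =
          ![m k β fun j => α j.castSucc, α (Fin.last k)] := by
        funext j
        fin_cases j
        · simp [insArg]
        · have hk1 : (1 : ℕ) + k - 1 = k := by omega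
          simp only [insArg, extZ, hk1]
          norm_num
          exact congrArg α (Fin.ext rfl)
      rw [hins, ulP_eval, sgn2_smul_smul, insSign_zero, sgn2_zero, one_smul]
      have hA : par2 ((∑ j : Fin k, d j.castSucc) + (((2 - (k : ℤ)) : ℤ) : ZMod N))
          = (∑ j ∈ Finset.range k, par2 (extZ d j)) + (k : ZMod 2) := by
        rw [par2_add hN, hout]
        congr 1
        rw [par2_sum hN Finset.univ (fun j : Fin k => d j.castSucc)]
        have hc : ∀ j : Fin k, par2 (d j.castSucc) = par2 (extZ d (j : ℕ)) := by
          intro j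
          have hj : (j : ℕ) < k + 1 := by omega
          simp only [extZ, dif_pos hj]
          congr 1
        rw [Finset.sum_congr rfl fun j _ => hc j]
        exact Fin.sum_univ_eq_sum_range (fun n => par2 (extZ d n)) k
      rw [hA]
      have hsplit1 : (∑ j ∈ Finset.range k, (par2 (extZ d j) + 1))
          = (∑ j ∈ Finset.range k, par2 (extZ d j)) + (k : ZMod 2) := by
        rw [Finset.sum_add_distrib, Finset.sum_const, Finset.card_range, nsmul_eq_mul, mul_one]
      rw [hsplit1]
      have h2 : ∀ S K : ZMod 2, (0 : ZMod 2) + (S + K) + (S + K) = 0 := by decide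
      rw [h2, sgn2_zero, one_smul]
    rw [hE1, hE2, hE3, hsplit]
    abel
  rw [hmatch, ← hred, hm.rel (k+1) β d α hα]
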